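/- (Decomposition of suboptimality for robust MDP) Let Q̂_h : S × A → ℝ (h ∈ {1,…,H}) be arbitrary functions, let π̂ be a Markov policy, set V̂_{H+1} ≡ 0 and V̂_h(s) = ∑_a π̂_h(a|s) Q̂_h(s,a), and define the model evaluation error ι_h(s,a) = (𝔹_h V̂_{h+1})(s,a) − Q̂_h(s,a). Let π* be a robust optimal Markov policy. Then for every s ∈ S there exist kernel sequences P^♮, P^†, P^‡, each a tuple (P_1,…,P_H) with P_h ∈ 𝒫_h for all h, such that SubOpt(π̂; s) ≤ −∑_{h=1}^H E^{π̂,P^♮}[ι_h(s_h,a_h) | s_1 = s] + ∑_{h=1}^H E^{π*,P^†}[ι_h(s_h,a_h) | s_1 = s] + ∑_{h=1}^H E^{π*,P^‡}[ ∑_{a∈A} Q̂_h(s_h,a)(π*_h(a|s_h) − π̂_h(a|s_h)) | s_1 = s ]. -/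

import Mathlib

open scoped BigOperators
open MeasureTheory

noncomputable section

/-- The probability simplex `Δ^{K-1} ⊆ ℝ^K`. -/
def probSimplex (K : ℕ) : Set (Fin K → ℝ) :=
  {α | (∀ k, 0 ≤ α k) ∧ ∑ k, α k = 1}

/-- Data of a group-linear DRMDP: shared simplex features `φ`, and for every step `h`,
coordinate `i` and site `k`, a reward factor `θ h i k ∈ [0,1]` and a probability
mass function `μ h i k` on the (finite) state space `S`. -/
structure DRMDP (S A : Type) [Fintype S] (H K d : ℕ) where
  φ : S → A → Fin d → ℝ
  φ_nonneg : ∀ s a i, 0 ≤ φ s a i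
  φ_sum : ∀ s a, ∑ i, φ s a i = 1
  θ : Fin H → Fin d → Fin K → ℝ
  θ_nonneg : ∀ h i k, 0 ≤ θ h i k
  θ_le_one : ∀ h i k, θ h i k ≤ 1
  μ : Fin H → Fin d → Fin K → S → ℝ
  μ_nonneg : ∀ h i k s', 0 ≤ μ h i k s'
  μ_sum : ∀ h i k, ∑ s', μ h i k s' = 1

namespace DRMDP

variable {S A : Type} [Fintype S] [Fintype A] {H K d : ℕ}

/-- Site-`k` transition kernel `P_h^k(s'|s,a) = ∑_i φ_i(s,a) μ_{h,i}^k(s')`. -/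
def Pk (M : DRMDP S A H K d) (h : Fin H) (k : Fin K) (s : S) (a : A) (s' : S) : ℝ :=
  ∑ i, M.φ s a i * M.μ h i k s'

/-- Site-`k` expected reward `r_h^k(s,a) = ∑_i φ_i(s,a) θ_{h,i}^k`. -/
def rk (M : DRMDP S A H K d) (h : Fin H) (k : Fin K) (s : S) (a : A) : ℝ :=
  ∑ i, M.φ s a i * M.θ h i k

/-- Membership `(P,r) ∈ U_h` in the d-rectangular feature-wise cross-site
convex-hull uncertainty set. -/
def inU (M : DRMDP S A H K d) (h : Fin H) (P : S → A → S → ℝ) (r : S → A → ℝ) : Prop :=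
  ∃ α : Fin d → Fin K → ℝ,
    (∀ i, α i ∈ probSimplex K) ∧
    (∀ s a, r s a = ∑ i, M.φ s a i * ∑ k, α i k * M.θ h i k) ∧
    (∀ s a s', P s a s' = ∑ i, M.φ s a i * ∑ k, α i k * M.μ h i k s')

/-- Membership `P ∈ 𝒫_h` (the transition kernels appearing in `U_h`). -/
def inP (M : DRMDP S A H K d) (h : Fin H) (P : S → A → S → ℝ) : Prop :=
  ∃ r, M.inU h P r

/-- The robust Bellman operator
`(𝔹_h V)(s,a) = inf_{(P,r) ∈ U_h} [ r(s,a) + ∑_{s'} P(s'|s,a) V(s') ]`. -/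
def bellman (M : DRMDP S A H K d) (h : Fin H) (V : S → ℝ) (s : S) (a : A) : ℝ :=
  sInf {x | ∃ P r, M.inU h P r ∧ x = r s a + ∑ s', P s a s' * V s'}

end DRMDP

/-- A Markov (possibly randomized) policy: `π h (·|s)` is a pmf on the actions. -/
def IsPolicy {S A : Type} [Fintype A] (H : ℕ) (π : Fin H → S → A → ℝ) : Prop :=
  ∀ h s, (∀ a, 0 ≤ π h s a) ∧ ∑ a, π h s a = 1

/-- `cumW H π P r t s` is the expected cumulative reward `W_t(s)` from (0-indexed)
step `t` on, under policy `π` and model sequence `(P,r)`; `W_t ≡ 0` for `t ≥ H`. -/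
def cumW {S A : Type} [Fintype S] [Fintype A] (H : ℕ)
    (π : Fin H → S → A → ℝ) (P : Fin H → S → A → S → ℝ) (r : Fin H → S → A → ℝ) :
    ℕ → S → ℝ
  | t =>
    if ht : t < H then
      fun s => ∑ a, π ⟨t, ht⟩ s a *
        (r ⟨t, ht⟩ s a + ∑ s', P ⟨t, ht⟩ s a s' * cumW H π P r (t + 1) s')
    else fun _ => 0
  termination_by t => H - t
  decreasing_by omega

namespace DRMDP

variable {S A : Type} [Fintype S] [Fintype A] {H K d : ℕ}

/-- Robust value function `V_t^π(s)`: worst case of `W_t(s)` over model sequences in `∏ U_h`. -/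
def robustV (M : DRMDP S A H K d) (π : Fin H → S → A → ℝ) (t : ℕ) (s : S) : ℝ :=
  sInf {x | ∃ P r, (∀ h : Fin H, M.inU h (P h) (r h)) ∧ x = cumW H π P r t s}

/-- Robust Q-function `Q_h^π(s,a)`. -/
def robustQ (M : DRMDP S A H K d) (π : Fin H → S → A → ℝ) (h : Fin H) (s : S) (a : A) : ℝ :=
  sInf {x | ∃ P r, (∀ t : Fin H, M.inU t (P t) (r t)) ∧
    x = r h s a + ∑ s', P h s a s' * cumW H π P r ((h : ℕ) + 1) s'}

/-- `πs` is a robust optimal Markov policy. -/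
def IsOptimalRobust (M : DRMDP S A H K d) (πs : Fin H → S → A → ℝ) : Prop :=
  IsPolicy H πs ∧ ∀ π, IsPolicy H π → ∀ (h : Fin H) (s : S),
    M.robustV π (h : ℕ) s ≤ M.robustV πs (h : ℕ) s

end DRMDP

/-- Step-`t` state distribution of the Markov chain started at `s₁`, following
policy `π` and transition kernels `P`. -/
def visit {S A : Type} [Fintype S] [Fintype A] [DecidableEq S] (H : ℕ)
    (π : Fin H → S → A → ℝ) (P : Fin H → S → A → S → ℝ) (s₁ : S) : ℕ → S → ℝ
  | 0 => fun s => if s = s₁ then 1 else 0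
  | t + 1 => fun s' =>
      if ht : t < H then
        ∑ s, ∑ a, visit H π P s₁ t s * π ⟨t, ht⟩ s a * P ⟨t, ht⟩ s a s'
      else 0

/-- `E^{π,P}[ f(s_h, a_h) | s_1 = s₁ ]` (0-indexed step `h`). -/
def expAt {S A : Type} [Fintype S] [Fintype A] [DecidableEq S] (H : ℕ)
    (π : Fin H → S → A → ℝ) (P : Fin H → S → A → S → ℝ) (s₁ : S)
    (h : Fin H) (f : S → A → ℝ) : ℝ :=
  ∑ s, ∑ a, visit H π P s₁ (h : ℕ) s * π h s a * f s a


/-!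
Fix an admissible model sequence. Telescoping along the chain (the performance-difference
identity) writes `W_1 − V̂_1` as the expected one-step Bellman residuals `r + P V̂ − Q̂` plus the
expected policy mismatch `⟨Q̂, π − π̂⟩`. For `π*` we take the model realising `𝔹_h V̂_{h+1}`,
whose residual is exactly `ι`, and bound the robust value from above by the value under that
model. For `π̂`, robust dynamic programming shows that the robust value is attained by a
worst-case model sequence; there the residual dominates `ι` because `𝔹_h` is an infimum, and the
mismatch term vanishes.
-/

theorem Nat.backward_induction {H : ℕ} {p : ℕ → Prop} (hge : ∀ t, H ≤ t → p t)
    (hstep : ∀ t, t < H → p (t + 1) → p t) (t : ℕ) : p t := by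
  induction hn : H - t generalizing t with
  | zero => exact hge t (by omega)
  | succ n ih => exact hstep t (by omega) (ih (t + 1) (by omega))

theorem le_sum_mul_of_mem_probSimplex {K : ℕ} {α c : Fin K → ℝ} {m : ℝ}
    (hα : α ∈ probSimplex K) (hm : ∀ k, m ≤ c k) : m ≤ ∑ k, α k * c k :=
  calc m = ∑ k, α k * m := by rw [← Finset.sum_mul, hα.2, one_mul]
    _ ≤ ∑ k, α k * c k := Finset.sum_le_sum fun k _ => mul_le_mul_of_nonneg_left (hm k) (hα.1 k)

theorem single_mem_probSimplex {K : ℕ} (k : Fin K) : Pi.single k 1 ∈ probSimplex K := by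
  refine ⟨fun j => ?_, by simp⟩
  by_cases hj : j = k <;> simp [hj]

section Evaluation

variable {S A : Type} [Fintype S] [Fintype A] {H : ℕ}
  (π : Fin H → S → A → ℝ) (P : Fin H → S → A → S → ℝ) (r : Fin H → S → A → ℝ)

theorem cumW_of_lt {t : ℕ} (ht : t < H) (s : S) :
    cumW H π P r t s = ∑ a, π ⟨t, ht⟩ s a *
      (r ⟨t, ht⟩ s a + ∑ s', P ⟨t, ht⟩ s a s' * cumW H π P r (t + 1) s') := by
  rw [cumW]; simp [ht]

theorem cumW_of_ge {t : ℕ} (ht : H ≤ t) (s : S) : cumW H π P r t s = 0 := by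
  rw [cumW]; simp [Nat.not_lt.mpr ht]

variable [DecidableEq S] (s₁ : S)

theorem visit_nonneg (hπ : ∀ h s a, 0 ≤ π h s a) (hP : ∀ h s a s', 0 ≤ P h s a s') (t : ℕ)
    (s : S) : 0 ≤ visit H π P s₁ t s := by
  induction t generalizing s with
  | zero => simp only [visit]; positivity
  | succ t ih =>
    simp only [visit]
    split_ifs
    · exact Finset.sum_nonneg fun s _ => Finset.sum_nonneg fun a _ =>
        mul_nonneg (mul_nonneg (ih s) (hπ _ s a)) (hP _ s a _)
    · exact le_rfl

theorem expAt_mono (hπ : ∀ h s a, 0 ≤ π h s a) (hP : ∀ h s a s', 0 ≤ P h s a s') (h : Fin H)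
    {f g : S → A → ℝ} (hfg : ∀ s a, f s a ≤ g s a) :
    expAt H π P s₁ h f ≤ expAt H π P s₁ h g :=
  Finset.sum_le_sum fun s _ => Finset.sum_le_sum fun a _ =>
    mul_le_mul_of_nonneg_left (hfg s a)
      (mul_nonneg (visit_nonneg π P s₁ hπ hP h s) (hπ h s a))

theorem expAt_zero (h : Fin H) : expAt H π P s₁ h (fun _ _ => 0) = 0 := by
  simp [expAt]

theorem expAt_add (h : Fin H) (f g : S → A → ℝ) :
    expAt H π P s₁ h (fun s a => f s a + g s a) = expAt H π P s₁ h f + expAt H π P s₁ h g := by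
  simp only [expAt, mul_add, Finset.sum_add_distrib]

theorem sum_visit_succ_mul {t : ℕ} (ht : t < H) (f : S → ℝ) :
    ∑ s', visit H π P s₁ (t + 1) s' * f s'
      = ∑ s, visit H π P s₁ t s * ∑ a, π ⟨t, ht⟩ s a * ∑ s', P ⟨t, ht⟩ s a s' * f s' := by
  simp only [visit, dif_pos ht, Finset.sum_mul, Finset.mul_sum]
  rw [Finset.sum_comm]
  refine Finset.sum_congr rfl fun s _ => ?_
  rw [Finset.sum_comm]
  exact Finset.sum_congr rfl fun a _ => Finset.sum_congr rfl fun s' _ => by ring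

theorem eq_sum_expAt_of_recursion (g : Fin H → S → A → ℝ) {D : ℕ → S → ℝ}
    (hD : ∀ t (ht : t < H) s, D t s =
      ∑ a, π ⟨t, ht⟩ s a * (g ⟨t, ht⟩ s a + ∑ s', P ⟨t, ht⟩ s a s' * D (t + 1) s'))
    (hDH : ∀ s, D H s = 0) :
    D 0 s₁ = ∑ h : Fin H, expAt H π P s₁ h (g h) := by
  set e : ℕ → ℝ := fun t => if ht : t < H then expAt H π P s₁ ⟨t, ht⟩ (g ⟨t, ht⟩) else 0
  have key : ∀ t ≤ H, ∑ s, visit H π P s₁ t s * D t s + ∑ h ∈ Finset.range t, e h = D 0 s₁ := by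
    intro t
    induction t with
    | zero => simp [visit, Finset.sum_ite_eq']
    | succ t ih =>
      intro ht
      have hlt : t < H := by omega
      have hstep : ∑ s, visit H π P s₁ t s * D t s
          = e t + ∑ s', visit H π P s₁ (t + 1) s' * D (t + 1) s' := by
        simp only [sum_visit_succ_mul π P s₁ hlt, e, dif_pos hlt, expAt, ← Finset.sum_add_distrib]
        refine Finset.sum_congr rfl fun s _ => ?_
        rw [hD t hlt, Finset.mul_sum, Finset.mul_sum, ← Finset.sum_add_distrib]
        exact Finset.sum_congr rfl fun a _ => by ring
      rw [Finset.sum_range_succ, ← ih hlt.le, hstep]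
      ring
  have hH := key H le_rfl
  simp only [hDH, mul_zero, Finset.sum_const_zero, zero_add] at hH
  rw [← hH, ← Fin.sum_univ_eq_sum_range]
  simp [e]

theorem cumW_sub_eq_sum_expAt (hπ : ∀ h s, ∑ a, π h s a = 1) (π' Q : Fin H → S → A → ℝ)
    {V : ℕ → S → ℝ} (hV : ∀ t (ht : t < H) s, V t s = ∑ a, π' ⟨t, ht⟩ s a * Q ⟨t, ht⟩ s a)
    (hVH : ∀ s, V H s = 0) :
    cumW H π P r 0 s₁ - V 0 s₁
      = ∑ h : Fin H, expAt H π P s₁ h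
          (fun s a => r h s a + ∑ s', P h s a s' * V (h + 1) s' - Q h s a)
        + ∑ h : Fin H, expAt H π P s₁ h (fun s _ => ∑ a, Q h s a * (π h s a - π' h s a)) := by
  rw [← Finset.sum_add_distrib]
  simp only [← expAt_add]
  refine eq_sum_expAt_of_recursion π P s₁ _ (D := fun t s => cumW H π P r t s - V t s)
    (fun t ht s => ?_) (fun s => by simp [cumW_of_ge π P r le_rfl, hVH])
  set c := ∑ a, Q ⟨t, ht⟩ s a * (π ⟨t, ht⟩ s a - π' ⟨t, ht⟩ s a)
  have hc : ∑ a, π ⟨t, ht⟩ s a * c = c := by rw [← Finset.sum_mul, hπ, one_mul]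
  rw [cumW_of_lt π P r ht, hV t ht]
  have hsummand : ∀ a, π ⟨t, ht⟩ s a * (r ⟨t, ht⟩ s a
      + ∑ s', P ⟨t, ht⟩ s a s' * V (t + 1) s' - Q ⟨t, ht⟩ s a + c
      + ∑ s', P ⟨t, ht⟩ s a s' * (cumW H π P r (t + 1) s' - V (t + 1) s'))
      = π ⟨t, ht⟩ s a * (r ⟨t, ht⟩ s a + ∑ s', P ⟨t, ht⟩ s a s' * cumW H π P r (t + 1) s')
        - π ⟨t, ht⟩ s a * Q ⟨t, ht⟩ s a + π ⟨t, ht⟩ s a * c := by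
    intro a
    simp only [mul_sub, Finset.sum_sub_distrib]
    ring
  rw [Finset.sum_congr rfl fun a _ => hsummand a, Finset.sum_add_distrib, Finset.sum_sub_distrib,
    hc]
  simp only [c, mul_sub, Finset.sum_sub_distrib]
  simp only [mul_comm (Q _ s _)]
  ring

end Evaluation

namespace DRMDP

variable {S A : Type} [Fintype S] {H K d : ℕ}

theorem inU.kernel_nonneg {M : DRMDP S A H K d} {h : Fin H} {P : S → A → S → ℝ}
    {r : S → A → ℝ} (hU : M.inU h P r) (s : S) (a : A) (s' : S) : 0 ≤ P s a s' := by
  obtain ⟨α, hα, -, hP⟩ := hU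
  rw [hP s a s']
  exact Finset.sum_nonneg fun i _ => mul_nonneg (M.φ_nonneg s a i)
    (Finset.sum_nonneg fun k _ => mul_nonneg ((hα i).1 k) (M.μ_nonneg h i k s'))

variable (M : DRMDP S A H K d)

theorem mixture_value_eq (h : Fin H) (α : Fin d → Fin K → ℝ) (V : S → ℝ) (s : S) (a : A) :
    (∑ i, M.φ s a i * ∑ k, α i k * M.θ h i k)
      + ∑ s', (∑ i, M.φ s a i * ∑ k, α i k * M.μ h i k s') * V s'
    = ∑ i, M.φ s a i * ∑ k, α i k * (M.θ h i k + ∑ s', M.μ h i k s' * V s') := by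
  simp only [Finset.sum_mul, Finset.mul_sum, mul_add, Finset.sum_add_distrib]
  congr 1
  rw [Finset.sum_comm]
  refine Finset.sum_congr rfl fun i _ => ?_
  rw [Finset.sum_comm]
  exact Finset.sum_congr rfl fun k _ => Finset.sum_congr rfl fun s' _ => by ring

/-- The robust Bellman infimum is attained, simultaneously at every `(s, a)`, by the model
that puts all the weight of each feature `i` on a site minimizing `θ + μ V`. -/
theorem exists_inU_forall_isLeast (hK : 1 ≤ K) (h : Fin H) (V : S → ℝ) :
    ∃ P r, M.inU h P r ∧ ∀ s a,
      IsLeast {x | ∃ P r, M.inU h P r ∧ x = r s a + ∑ s', P s a s' * V s'}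
        (r s a + ∑ s', P s a s' * V s') := by
  have : Nonempty (Fin K) := ⟨⟨0, hK⟩⟩
  set c : Fin d → Fin K → ℝ := fun i k => M.θ h i k + ∑ s', M.μ h i k s' * V s'
  choose kmin _ hkmin using fun i => Finset.exists_min_image Finset.univ (c i) Finset.univ_nonempty
  set α : Fin d → Fin K → ℝ := fun i => Pi.single (kmin i) 1
  have hU : M.inU h (fun s a s' => ∑ i, M.φ s a i * ∑ k, α i k * M.μ h i k s')
      (fun s a => ∑ i, M.φ s a i * ∑ k, α i k * M.θ h i k) :=
    ⟨α, fun i => single_mem_probSimplex _, fun _ _ => rfl, fun _ _ _ => rfl⟩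
  refine ⟨_, _, hU, fun s a => ⟨⟨_, _, hU, rfl⟩, ?_⟩⟩
  rintro x ⟨P', r', ⟨β, hβ, hr', hP'⟩, rfl⟩
  simp only [hr', hP', mixture_value_eq]
  refine Finset.sum_le_sum fun i _ => mul_le_mul_of_nonneg_left ?_ (M.φ_nonneg s a i)
  rw [show ∑ k, α i k * c i k = c i (kmin i) by simp [α, Pi.single_apply]]
  exact le_sum_mul_of_mem_probSimplex (hβ i) fun k => hkmin i k (Finset.mem_univ k)

theorem exists_inU_forall_bellman_eq (hK : 1 ≤ K) (h : Fin H) (V : S → ℝ) :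
    ∃ P r, M.inU h P r ∧ ∀ s a, M.bellman h V s a = r s a + ∑ s', P s a s' * V s' := by
  obtain ⟨P, r, hU, hleast⟩ := M.exists_inU_forall_isLeast hK h V
  exact ⟨P, r, hU, fun s a => (hleast s a).csInf_eq⟩

theorem bellman_le (hK : 1 ≤ K) {h : Fin H} {P : S → A → S → ℝ} {r : S → A → ℝ}
    (hU : M.inU h P r) (V : S → ℝ) (s : S) (a : A) :
    M.bellman h V s a ≤ r s a + ∑ s', P s a s' * V s' := by
  obtain ⟨_, _, _, hleast⟩ := M.exists_inU_forall_isLeast hK h V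
  exact csInf_le (hleast s a).bddBelow ⟨P, r, hU, rfl⟩

variable [Fintype A]

def dpValue (π : Fin H → S → A → ℝ) : ℕ → S → ℝ
  | t =>
    if ht : t < H then
      fun s => ∑ a, π ⟨t, ht⟩ s a * M.bellman ⟨t, ht⟩ (dpValue π (t + 1)) s a
    else fun _ => 0
  termination_by t => H - t
  decreasing_by omega

theorem dpValue_of_lt (π : Fin H → S → A → ℝ) {t : ℕ} (ht : t < H) (s : S) :
    M.dpValue π t s = ∑ a, π ⟨t, ht⟩ s a * M.bellman ⟨t, ht⟩ (M.dpValue π (t + 1)) s a := by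
  rw [dpValue]; simp [ht]

theorem dpValue_of_ge (π : Fin H → S → A → ℝ) {t : ℕ} (ht : H ≤ t) (s : S) :
    M.dpValue π t s = 0 := by
  rw [dpValue]; simp [Nat.not_lt.mpr ht]

theorem dpValue_le_cumW (hK : 1 ≤ K) {π : Fin H → S → A → ℝ} (hπ : ∀ h s a, 0 ≤ π h s a)
    {P : Fin H → S → A → S → ℝ} {r : Fin H → S → A → ℝ} (hU : ∀ h, M.inU h (P h) (r h))
    (t : ℕ) (s : S) : M.dpValue π t s ≤ cumW H π P r t s := by
  induction t using Nat.backward_induction (H := H) generalizing s with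
  | hge t ht => rw [M.dpValue_of_ge π ht, cumW_of_ge π P r ht]
  | hstep t ht ih =>
    rw [M.dpValue_of_lt π ht, cumW_of_lt π P r ht]
    gcongr with a
    · exact hπ _ s a
    calc M.bellman ⟨t, ht⟩ (M.dpValue π (t + 1)) s a
        ≤ r ⟨t, ht⟩ s a + ∑ s', P ⟨t, ht⟩ s a s' * M.dpValue π (t + 1) s' :=
          M.bellman_le hK (hU _) _ s a
      _ ≤ r ⟨t, ht⟩ s a + ∑ s', P ⟨t, ht⟩ s a s' * cumW H π P r (t + 1) s' := by
        gcongr with s'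
        · exact (hU _).kernel_nonneg s a s'
        exact ih s'

/-- Choosing at each step a Bellman minimizer for the next dynamic-programming value yields a
worst-case model sequence. -/
theorem exists_cumW_eq_dpValue (hK : 1 ≤ K) (π : Fin H → S → A → ℝ) :
    ∃ P r, (∀ h, M.inU h (P h) (r h)) ∧ ∀ t s, cumW H π P r t s = M.dpValue π t s := by
  choose P r hU hP using fun h : Fin H =>
    M.exists_inU_forall_bellman_eq hK h (M.dpValue π (h + 1))
  refine ⟨P, r, hU, fun t s => ?_⟩
  induction t using Nat.backward_induction (H := H) generalizing s with
  | hge t ht => rw [M.dpValue_of_ge π ht, cumW_of_ge π P r ht]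
  | hstep t ht ih =>
    rw [M.dpValue_of_lt π ht, cumW_of_lt π P r ht]
    simp only [ih, hP]

theorem robustV_eq_dpValue (hK : 1 ≤ K) {π : Fin H → S → A → ℝ} (hπ : ∀ h s a, 0 ≤ π h s a)
    (t : ℕ) (s : S) : M.robustV π t s = M.dpValue π t s := by
  obtain ⟨P, r, hU, hPr⟩ := M.exists_cumW_eq_dpValue hK π
  refine IsLeast.csInf_eq ⟨⟨P, r, hU, (hPr t s).symm⟩, ?_⟩
  rintro x ⟨P', r', hU', rfl⟩
  exact M.dpValue_le_cumW hK hπ hU' t s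

theorem robustV_le_cumW (hK : 1 ≤ K) {π : Fin H → S → A → ℝ} (hπ : ∀ h s a, 0 ≤ π h s a)
    {P : Fin H → S → A → S → ℝ} {r : Fin H → S → A → ℝ} (hU : ∀ h, M.inU h (P h) (r h))
    (t : ℕ) (s : S) : M.robustV π t s ≤ cumW H π P r t s :=
  (M.robustV_eq_dpValue hK hπ t s).trans_le (M.dpValue_le_cumW hK hπ hU t s)

end DRMDP

/-- Decomposition of suboptimality for the robust MDP: with model evaluation
error `ι_h = 𝔹_h V̂_{h+1} − Q̂_h` and `V̂_h(s) = ∑_a π̂_h(a|s) Q̂_h(s,a)`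
(`V̂_{H+1} ≡ 0`), for every initial state there are kernel sequences
`P^♮, P^†, P^‡` in `∏_h 𝒫_h` with
`SubOpt(π̂;s) ≤ −∑_h E^{π̂,P^♮}[ι_h] + ∑_h E^{π*,P^†}[ι_h]
  + ∑_h E^{π*,P^‡}[⟨Q̂_h(s_h,·), π*_h(·|s_h) − π̂_h(·|s_h)⟩]`. -/
theorem stmt_6 {S A : Type} [Fintype S] [Fintype A] [DecidableEq S]
    {H K d : ℕ} (hK : 1 ≤ K) (M : DRMDP S A H K d)
    (Qhat : Fin H → S → A → ℝ)
    (πhat : Fin H → S → A → ℝ) (hπhat : IsPolicy H πhat)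
    (πstar : Fin H → S → A → ℝ) (hopt : M.IsOptimalRobust πstar)
    (Vhat : ℕ → S → ℝ)
    (hVhat : ∀ (t : ℕ) (ht : t < H) (s : S),
      Vhat t s = ∑ a, πhat ⟨t, ht⟩ s a * Qhat ⟨t, ht⟩ s a)
    (hVhat0 : ∀ t : ℕ, H ≤ t → ∀ s, Vhat t s = 0)
    (ι : Fin H → S → A → ℝ)
    (hι : ∀ (h : Fin H) (s : S) (a : A),
      ι h s a = M.bellman h (Vhat ((h : ℕ) + 1)) s a - Qhat h s a)
    (s₁ : S) :
    ∃ Pn Pd Pdd : Fin H → S → A → S → ℝ,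
      (∀ h : Fin H, M.inP h (Pn h)) ∧
      (∀ h : Fin H, M.inP h (Pd h)) ∧
      (∀ h : Fin H, M.inP h (Pdd h)) ∧
      M.robustV πstar 0 s₁ - M.robustV πhat 0 s₁ ≤
        -(∑ h : Fin H, expAt H πhat Pn s₁ h (fun s a => ι h s a))
        + (∑ h : Fin H, expAt H πstar Pd s₁ h (fun s a => ι h s a))
        + ∑ h : Fin H, expAt H πstar Pdd s₁ h
            (fun s _ => ∑ a, Qhat h s a * (πstar h s a - πhat h s a)) := by
  have hπs := hopt.1
  choose Pd rd hUd hPd using fun h : Fin H =>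
    M.exists_inU_forall_bellman_eq hK h (Vhat (h + 1))
  obtain ⟨Pn, rn, hUn, hPn⟩ := M.exists_cumW_eq_dpValue hK πhat
  have hstar : M.robustV πstar 0 s₁ - Vhat 0 s₁
      ≤ (∑ h : Fin H, expAt H πstar Pd s₁ h (fun s a => ι h s a))
        + ∑ h : Fin H, expAt H πstar Pd s₁ h
            (fun s _ => ∑ a, Qhat h s a * (πstar h s a - πhat h s a)) := by
    calc M.robustV πstar 0 s₁ - Vhat 0 s₁ ≤ cumW H πstar Pd rd 0 s₁ - Vhat 0 s₁ := by
          gcongr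
          exact M.robustV_le_cumW hK (fun h s => (hπs h s).1) hUd 0 s₁
      _ = _ := by
          rw [cumW_sub_eq_sum_expAt πstar Pd rd s₁ (fun h s => (hπs h s).2) πhat Qhat hVhat
            (hVhat0 H le_rfl)]
          simp only [hι, hPd]
  have hhat : ∑ h : Fin H, expAt H πhat Pn s₁ h (fun s a => ι h s a)
      ≤ M.robustV πhat 0 s₁ - Vhat 0 s₁ := by
    rw [M.robustV_eq_dpValue hK (fun h s => (hπhat h s).1), ← hPn,
      cumW_sub_eq_sum_expAt πhat Pn rn s₁ (fun h s => (hπhat h s).2) πhat Qhat hVhat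
        (hVhat0 H le_rfl)]
    simp only [sub_self, mul_zero, expAt_zero, Finset.sum_const_zero, add_zero]
    refine Finset.sum_le_sum fun h _ => expAt_mono πhat Pn s₁ (fun h s => (hπhat h s).1)
      (fun h => (hUn h).kernel_nonneg) h fun s a => ?_
    rw [hι]
    linarith [M.bellman_le hK (hUn h) (Vhat (h + 1)) s a]
  exact ⟨Pn, Pd, Pd, fun h => ⟨rn h, hUn h⟩, fun h => ⟨rd h, hUd h⟩, fun h => ⟨rd h, hUd h⟩,
    by linarith⟩

end
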